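/- For every n ≥ 1, in the POMDP P_n (defined in the context) with safety objective Safe(L ∖ {Bad}), every finite-memory randomized observation-based strategy that is positive winning from the initial state q_0 has memory of size at least p*_n = p_1·p_2⋯p_n; in particular its memory size is at least 2^n, while P_n has 2 + (p_1 + … + p_n) states, a number polynomial in n. -/

import Mathlib

/-!
Fix a positive winning finite-memory strategy and consider the finite Markov chain it induces on
configurations (memory, state). The finite-horizon safety values satisfy a Bellman equation, so a
reachable configuration of maximal limit value passes that (positive) value on to all its
successors; hence from it `Bad` is unreachable in the chain. From such a configuration the
strategy must be able to reach `q₀` and then, with one memory state `m₁`, every `q_1^i` at once.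
Keeping all loops safe simultaneously means: after `k` steps in the loops, `#` is impossible
unless `p_i ∣ k + 1` for every `i`, i.e. `p*_n ∣ k + 1`, and `#` is forced when that holds. Along
the memory sequence `m₁, f m₁, f (f m₁), …` of any consistent choice of actions, `#` thus becomes
available for the first time after `p*_n - 1` steps, so its first `p*_n` entries are distinct.
-/

open scoped ENNReal

/-- A partially-observable Markov decision process (POMDP) with states `L`,
actions `A` and observations `O`: a probabilistic transition function and an
observation function (the observations partition the state space). -/
structure POMDP (L : Type) (A : Type) (O : Type) where
  δ : L → A → PMF L
  obs : L → O

namespace POMDP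

variable {L A O : Type}

/-- A (randomized) strategy: given the initial state and the history of
(action, state) steps played so far, it chooses a distribution on actions. -/
abbrev Strategy (L A : Type) := L → List (A × L) → PMF A

/-- The sequence of states visited along a finite prefix. -/
def statesOf (l : L) (h : List (A × L)) : List L := l :: h.map Prod.snd

/-- Auxiliary probability of a finite prefix, for a strategy `π` given as a
function of the remaining history. -/
noncomputable def prefProbAux (M : POMDP L A O) :
    (List (A × L) → PMF A) → L → List (A × L) → ℝ≥0∞
  | _, _, [] => 1
  | π, l, (a, l') :: h =>
      π [] a * M.δ l a l' * M.prefProbAux (fun h' => π ((a, l') :: h')) l' h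

/-- The probability, under strategy `α` from state `l`, that the play starts
with the finite prefix `h` of (action, state) steps. -/
noncomputable def prefProb (M : POMDP L A O) (α : Strategy L A) (l : L)
    (h : List (A × L)) : ℝ≥0∞ :=
  M.prefProbAux (α l) l h

/-- A prefix is consistent with `α` from `l` if it has positive probability. -/
def Consistent (M : POMDP L A O) (α : Strategy L A) (l : L) (h : List (A × L)) : Prop :=
  0 < M.prefProb α l h

/-- The probability, under strategy `α` from state `l`, that the length-`n`
prefix of the play satisfies the predicate `P`. -/
noncomputable def horizonProb (M : POMDP L A O) [Fintype L] [Fintype A]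
    (α : Strategy L A) (l : L) (n : ℕ) (P : List (A × L) → Prop) : ℝ≥0∞ :=
  ∑ f : Fin n → A × L,
    Set.indicator {g : Fin n → A × L | P (List.ofFn g)}
      (fun g => M.prefProb α l (List.ofFn g)) f

/-- `Pr_l^α(Reach(T))`: probability that the play visits a state of `T`
(as the increasing limit of the finite-horizon reachability probabilities). -/
noncomputable def reachProb (M : POMDP L A O) [Fintype L] [Fintype A]
    (α : Strategy L A) (l : L) (T : Set L) : ℝ≥0∞ :=
  ⨆ n, M.horizonProb α l n (fun h => ∃ s ∈ statesOf l h, s ∈ T)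

/-- `Pr_l^α(Safe(T))`: probability that all states of the play lie in `T`
(as the decreasing limit of the finite-horizon safety probabilities). -/
noncomputable def safeProb (M : POMDP L A O) [Fintype L] [Fintype A]
    (α : Strategy L A) (l : L) (T : Set L) : ℝ≥0∞ :=
  ⨅ n, M.horizonProb α l n (fun h => ∀ s ∈ statesOf l h, s ∈ T)

/-- `Pr_l^α(Until(T₁,T₂))`: probability that the play visits `T₂` at some
position `k` with all positions `≤ k` in `T₁`. -/
noncomputable def untilProb (M : POMDP L A O) [Fintype L] [Fintype A]
    (α : Strategy L A) (l : L) (T₁ T₂ : Set L) : ℝ≥0∞ :=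
  ⨆ n, M.horizonProb α l n (fun h => ∃ k, ∃ hk : k < (statesOf l h).length,
      (statesOf l h).get ⟨k, hk⟩ ∈ T₂ ∧
      ∀ j, ∀ hj : j < (statesOf l h).length, j ≤ k → (statesOf l h).get ⟨j, hj⟩ ∈ T₁)

/-- `Pr_l^α(coBüchi(T))`: probability that from some point on all states of
the play lie in `T`. -/
noncomputable def coBuchiProb (M : POMDP L A O) [Fintype L] [Fintype A]
    (α : Strategy L A) (l : L) (T : Set L) : ℝ≥0∞ :=
  ⨆ k, ⨅ n, M.horizonProb α l n (fun h =>
    ∀ j, ∀ hj : j < (statesOf l h).length, k ≤ j → (statesOf l h).get ⟨j, hj⟩ ∈ T)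

/-- `Pr_l^α(Büchi(T))`: probability that the play visits `T` infinitely often. -/
noncomputable def buchiProb (M : POMDP L A O) [Fintype L] [Fintype A]
    (α : Strategy L A) (l : L) (T : Set L) : ℝ≥0∞ :=
  ⨅ k, ⨆ n, M.horizonProb α l n (fun h =>
    ∃ j, ∃ hj : j < (statesOf l h).length, k ≤ j ∧ (statesOf l h).get ⟨j, hj⟩ ∈ T)

/-- A strategy is observation-based if it plays the same distribution after any
two prefixes with the same sequences of observations and of actions. -/
def ObservationBased (M : POMDP L A O) (α : Strategy L A) : Prop :=
  ∀ l l' (h h' : List (A × L)), M.obs l = M.obs l' →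
    h.map Prod.fst = h'.map Prod.fst →
    h.map (fun p => M.obs p.2) = h'.map (fun p => M.obs p.2) →
    α l h = α l' h'

/-- A strategy is pure if it always plays a Dirac distribution. -/
def PureStrategy (α : Strategy L A) : Prop := ∀ l h, ∃ a, α l h = PMF.pure a

/-- Edge of the underlying graph of the POMDP. -/
def Edge (M : POMDP L A O) (l l' : L) : Prop := ∃ a, 0 < M.δ l a l'

/-- Reachability in the underlying graph of the POMDP. -/
def ReachableFrom (M : POMDP L A O) (l l' : L) : Prop :=
  Relation.ReflTransGen M.Edge l l'

/-- The memory state reached by a memory-update function `u` (together with the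
current state) after running through a prefix. -/
def memRun (M : POMDP L A O) {Mem : Type} (u : Mem → O → A → Mem) :
    Mem → L → List (A × L) → Mem × L
  | m, l, [] => (m, l)
  | m, l, (a, l') :: h => M.memRun u (u m (M.obs l) a) l' h

/-- The (observation-based) strategy induced by a finite-memory machine given by
memory-update function `u`, next-action function `next` and initial memory `m0`. -/
def fmStrategy (M : POMDP L A O) {Mem : Type} (u : Mem → O → A → Mem)
    (next : Mem → O → PMF A) (m0 : Mem) : Strategy L A :=
  fun l h =>
    let p := M.memRun u m0 l h
    next p.1 (M.obs p.2)

/-- The distribution choosing `x` and `y` with probability 1/2 each. -/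
noncomputable def half (x y : L) : PMF L :=
  (PMF.uniformOfFintype Bool).map (fun b => if b then x else y)

end POMDP

/-- The state space of the POMDP `P_n`: for each `1 ≤ i ≤ n` a loop of `p_i`
states `q_1^i, …, q_{p_i}^i` where `p_i` is the `i`-th prime number (encoded as
`Sum.inl ⟨i, j⟩` with `j : Fin p_i` standing for `q_{j+1}^i`), together with the
initial state `q_0 = Sum.inr 0` and the absorbing state `Bad = Sum.inr 1`. -/
abbrev PnState (n : ℕ) : Type :=
  (Σ i : Fin n, Fin (Nat.nth Nat.Prime i.val)) ⊕ Fin 2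

/-- The actions of `P_n`: `some i` is the action `i+1 ∈ Σ_n = {1,…,n}` and
`none` is the action `#`. -/
abbrev PnAction (n : ℕ) : Type := Option (Fin n)

/-- `p*_n = p_1 ⋯ p_n`, the product of the first `n` primes. -/
noncomputable def pstar (n : ℕ) : ℕ := ∏ i : Fin n, Nat.nth Nat.Prime i.val

/-- The POMDP `P_n`. From `q_0`, every action in `Σ_n` goes to `q_1^i` with
probability `1/n` for each `i`, and `#` goes to `Bad`. From `q_j^i` with
`j < p_i`, every action in `Σ_n` goes to `q_{j+1}^i` and to `q_0` with
probability `1/2` each, and `#` goes to `Bad`. From `q_{p_i}^i`, every action in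
`Σ_n ∖ {i}` goes to `q_1^i` and to `q_0` with probability `1/2` each, the action
`i` goes to `Bad`, and `#` goes to `q_0`. `Bad` is absorbing. Observations:
`o_1 = {q_0}` (observation `0`), `o_2` = the loop states (observation `1`), and
`{Bad}` (observation `2`). -/
noncomputable def PnM (n : ℕ) [NeZero n] : POMDP (PnState n) (PnAction n) (Fin 3) where
  δ := fun s act =>
    match s with
    | Sum.inr k =>
        if k = 0 then
          match act with
          | some _ => (PMF.uniformOfFintype (Fin n)).map
              (fun i => Sum.inl ⟨i, ⟨0, (Nat.prime_nth_prime i.val).pos⟩⟩)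
          | none => PMF.pure (Sum.inr 1)
        else PMF.pure (Sum.inr 1)
    | Sum.inl ⟨i, j⟩ =>
        if hlt : j.val + 1 < Nat.nth Nat.Prime i.val then
          match act with
          | some _ => POMDP.half (Sum.inl ⟨i, ⟨j.val + 1, hlt⟩⟩) (Sum.inr 0)
          | none => PMF.pure (Sum.inr 1)
        else
          match act with
          | some k =>
              if k = i then PMF.pure (Sum.inr 1)
              else POMDP.half (Sum.inl ⟨i, ⟨0, (Nat.prime_nth_prime i.val).pos⟩⟩)
                     (Sum.inr 0)
          | none => PMF.pure (Sum.inr 0)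
  obs := fun s =>
    match s with
    | Sum.inr k => if k = 0 then 0 else 2
    | Sum.inl _ => 1

open Finset

lemma PMF.sum_coe_eq_one {α : Type*} [Fintype α] (p : PMF α) : ∑ a, p a = 1 := by
  rw [← tsum_fintype (L := .unconditional _)]; exact p.tsum_coe

lemma ENNReal.eq_of_le_sum_mul {ι : Type*} [Fintype ι] {c q : ι → ℝ≥0∞} {b : ℝ≥0∞}
    (hb : b ≠ ∞) (hc : ∑ j, c j = 1) (hq : ∀ j, c j ≠ 0 → q j ≤ b)
    (h : b ≤ ∑ j, c j * q j) {i : ι} (hi : c i ≠ 0) : q i = b := by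
  classical
  refine (hq i hi).antisymm (not_lt.1 fun hlt => h.not_gt ?_)
  have hle : ∀ j, c j * q j ≤ c j * b := fun j => by
    rcases eq_or_ne (c j) 0 with h0 | h0
    · simp [h0]
    · exact mul_le_mul_right (hq j h0) _
  have hci : c i ≠ ∞ := (ENNReal.lt_top_of_sum_ne_top (hc ▸ ENNReal.one_ne_top) (mem_univ i)).ne
  have hrest : ∑ j ∈ univ.erase i, c j * q j ≠ ∞ := by
    refine ne_top_of_le_ne_top ?_ ((sum_le_sum fun j _ => hle j).trans
      (sum_le_sum_of_subset (erase_subset i univ)))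
    rwa [← sum_mul, hc, one_mul]
  calc ∑ j, c j * q j = c i * q i + ∑ j ∈ univ.erase i, c j * q j :=
        (add_sum_erase _ _ (mem_univ i)).symm
    _ < c i * b + ∑ j ∈ univ.erase i, c j * b :=
        ENNReal.add_lt_add_of_lt_of_le hrest (ENNReal.mul_lt_mul_right hi hci hlt)
          (sum_le_sum fun j _ => hle j)
    _ = b := by rw [add_sum_erase _ (fun j => c j * b) (mem_univ i), ← sum_mul, hc, one_mul]

lemma Function.add_one_le_card_of_iterate {α : Type*} [Fintype α] {f : α → α} {x : α}
    {P : α → Prop} {N : ℕ} (hN : P (f^[N] x)) (hlt : ∀ k < N, ¬ P (f^[k] x)) :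
    N + 1 ≤ Fintype.card α := by
  suffices hinj : Function.Injective fun k : Fin (N + 1) => f^[k] x by
    simpa using Fintype.card_le_of_injective _ hinj
  have key : ∀ a b : Fin (N + 1), a < b → f^[a] x ≠ f^[b] x := by
    intro a b hab heq
    have hb : (b : ℕ) ≤ N := Nat.lt_succ_iff.1 b.2
    refine hlt (N - b + a) (by omega) ?_
    rwa [Function.iterate_add_apply, heq, ← Function.iterate_add_apply, Nat.sub_add_cancel hb]
  intro a b heq
  rcases lt_trichotomy a b with hab | rfl | hab
  · exact absurd heq (key a b hab)
  · rfl
  · exact absurd heq.symm (key b a hab)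

namespace POMDP

variable {L A O Mem : Type} (M : POMDP L A O) (u : Mem → O → A → Mem) (next : Mem → O → PMF A)

noncomputable def stepWeight (s : Mem × L) (x : A × L) : ℝ≥0∞ :=
  next s.1 (M.obs s.2) x.1 * M.δ s.2 x.1 x.2

def stepTo (s : Mem × L) (x : A × L) : Mem × L := (u s.1 (M.obs s.2) x.1, x.2)

def MemStep (s t : Mem × L) : Prop := ∃ x, M.stepWeight next s x ≠ 0 ∧ M.stepTo u s x = t

def SurelySafe (T : Set L) (s : Mem × L) : Prop :=
  ∀ t, Relation.ReflTransGen (M.MemStep u next) s t → t.2 ∈ T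

variable {M u next}

namespace SurelySafe

variable {T : Set L} {s : Mem × L}

lemma mem (h : M.SurelySafe u next T s) : s.2 ∈ T := h s .refl

lemma step (h : M.SurelySafe u next T s) {a : A} {l : L} (ha : next s.1 (M.obs s.2) a ≠ 0)
    (hd : M.δ s.2 a l ≠ 0) : M.SurelySafe u next T (u s.1 (M.obs s.2) a, l) :=
  fun t ht => h t (.head ⟨(a, l), mul_ne_zero ha hd, rfl⟩ ht)

lemma apply_eq_zero (h : M.SurelySafe u next T s) {a : A} {l : L} (hd : M.δ s.2 a l ≠ 0)
    (hl : l ∉ T) : next s.1 (M.obs s.2) a = 0 :=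
  by_contra fun ha => hl (h.step ha hd).mem

end SurelySafe

lemma prefProb_fmStrategy_cons (m : Mem) (l : L) (x : A × L) (h : List (A × L)) :
    M.prefProb (M.fmStrategy u next m) l (x :: h) =
      M.stepWeight next (m, l) x *
        M.prefProb (M.fmStrategy u next (M.stepTo u (m, l) x).1) x.2 h := rfl

section Finite

variable [Fintype L] [Fintype A]

lemma sum_stepWeight (s : Mem × L) : ∑ x, M.stepWeight next s x = 1 := by
  simp only [stepWeight, Fintype.sum_prod_type, ← mul_sum, PMF.sum_coe_eq_one, mul_one]

variable (M u next) (T : Set L)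

noncomputable def safeValue (N : ℕ) (s : Mem × L) : ℝ≥0∞ :=
  M.horizonProb (M.fmStrategy u next s.1) s.2 N (fun h => ∀ l ∈ statesOf s.2 h, l ∈ T)

noncomputable def safeLimit (s : Mem × L) : ℝ≥0∞ := ⨅ N, M.safeValue u next T N s

variable {M u next T} {s : Mem × L}

lemma safeValue_eq_zero (hs : s.2 ∉ T) (N : ℕ) : M.safeValue u next T N s = 0 := by
  refine sum_eq_zero fun g _ => Set.indicator_of_notMem (fun hg => hs ?_) _
  exact (Set.mem_ofPred_eq ▸ hg : ∀ l ∈ statesOf s.2 _, l ∈ T) _ List.mem_cons_self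

lemma safeValue_zero (hs : s.2 ∈ T) : M.safeValue u next T 0 s = 1 := by
  simp [safeValue, horizonProb, statesOf, hs, prefProb, prefProbAux]

lemma safeValue_zero_le_one (s : Mem × L) : M.safeValue u next T 0 s ≤ 1 := by
  by_cases hs : s.2 ∈ T
  · exact (safeValue_zero hs).le
  · simp [safeValue_eq_zero hs]

lemma safeValue_succ (hs : s.2 ∈ T) (N : ℕ) :
    M.safeValue u next T (N + 1) s =
      ∑ x, M.stepWeight next s x * M.safeValue u next T N (M.stepTo u s x) := by
  rw [safeValue, horizonProb, ← (Fin.consEquiv fun _ => A × L).sum_comp, Fintype.sum_prod_type]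
  refine sum_congr rfl fun x _ => ?_
  rw [safeValue, horizonProb, mul_sum]
  refine sum_congr rfl fun g _ => ?_
  classical
  simp only [Set.indicator_apply, Set.mem_ofPred_eq, Fin.consEquiv_apply, List.ofFn_succ,
    Fin.cons_zero, Fin.cons_succ, statesOf, List.map_cons, List.forall_mem_cons, hs, true_and,
    prefProb_fmStrategy_cons, mul_ite, mul_zero]
  rfl

lemma safeValue_succ_le (N : ℕ) (s : Mem × L) :
    M.safeValue u next T (N + 1) s ≤ M.safeValue u next T N s := by
  by_cases hs : s.2 ∈ T
  swap
  · simp [safeValue_eq_zero hs]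
  induction N generalizing s with
  | zero =>
    calc M.safeValue u next T 1 s
        = ∑ x, M.stepWeight next s x * M.safeValue u next T 0 (M.stepTo u s x) :=
          safeValue_succ hs 0
      _ ≤ ∑ x, M.stepWeight next s x :=
          sum_le_sum fun x _ => mul_le_of_le_one_right' (safeValue_zero_le_one _)
      _ = M.safeValue u next T 0 s := by rw [sum_stepWeight, safeValue_zero hs]
  | succ N ih =>
    rw [safeValue_succ hs, safeValue_succ hs]
    gcongr with x
    by_cases hx : (M.stepTo u s x).2 ∈ T
    · exact ih _ hx
    · simp [safeValue_eq_zero hx]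

lemma safeLimit_le_one (s : Mem × L) : M.safeLimit u next T s ≤ 1 :=
  (iInf_le _ 0).trans (safeValue_zero_le_one s)

lemma safeLimit_eq_zero (hs : s.2 ∉ T) : M.safeLimit u next T s = 0 := by
  simp [safeLimit, safeValue_eq_zero hs]

lemma safeLimit_eq_sum (hs : s.2 ∈ T) :
    M.safeLimit u next T s =
      ∑ x, M.stepWeight next s x * M.safeLimit u next T (M.stepTo u s x) := by
  have hanti : ∀ s', Antitone fun N => M.safeValue u next T N s' := fun s' =>
    antitone_nat_of_succ_le fun N => safeValue_succ_le N s'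
  calc M.safeLimit u next T s = ⨅ N, M.safeValue u next T (N + 1) s :=
        le_antisymm (le_iInf fun N => iInf_le _ _)
          (le_iInf fun N => (iInf_le _ N).trans (hanti s N.le_succ))
    _ = ⨅ N, ∑ x, M.stepWeight next s x * M.safeValue u next T N (M.stepTo u s x) := by
        simp only [safeValue_succ hs]
    _ = ∑ x, ⨅ N, M.stepWeight next s x * M.safeValue u next T N (M.stepTo u s x) :=
        ENNReal.iInf_sum fun _ i j => ⟨max i j, fun x _ =>
          ⟨by gcongr; exact hanti _ (le_max_left i j),
           by gcongr; exact hanti _ (le_max_right i j)⟩⟩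
    _ = ∑ x, M.stepWeight next s x * M.safeLimit u next T (M.stepTo u s x) := by
        refine sum_congr rfl fun x _ => (ENNReal.mul_iInf fun h => ?_).symm
        exact absurd h (ENNReal.mul_ne_top (PMF.apply_ne_top _ _) (PMF.apply_ne_top _ _))

theorem exists_surelySafe_of_safeProb_pos [Fintype Mem] {m₀ : Mem} {l₀ : L}
    (h : 0 < M.safeProb (M.fmStrategy u next m₀) l₀ T) :
    ∃ s, Relation.ReflTransGen (M.MemStep u next) (m₀, l₀) s ∧ M.SurelySafe u next T s := by
  set R := {s | Relation.ReflTransGen (M.MemStep u next) (m₀, l₀) s}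
  obtain ⟨s, hsR, hmax⟩ := R.exists_max_image (M.safeLimit u next T) R.toFinite ⟨_, .refl⟩
  -- `M.safeLimit u next T (m₀, l₀)` unfolds to the `safeProb` in `h`.
  have hpos : 0 < M.safeLimit u next T s := h.trans_le (hmax _ .refl)
  have hfin : M.safeLimit u next T s ≠ ∞ :=
    ne_top_of_le_ne_top ENNReal.one_ne_top (safeLimit_le_one s)
  have hconst : ∀ t, Relation.ReflTransGen (M.MemStep u next) s t →
      M.safeLimit u next T t = M.safeLimit u next T s := by
    intro t hst
    induction hst with
    | refl => rfl
    | @tail t t' hst htt' ih =>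
      obtain ⟨x, hx, rfl⟩ := htt'
      have htT : t.2 ∈ T := by_contra fun hT => hpos.ne' (ih ▸ safeLimit_eq_zero hT)
      refine ENNReal.eq_of_le_sum_mul hfin (sum_stepWeight t)
        (fun y hy => hmax _ ((hsR.trans hst).tail ⟨y, hy, rfl⟩)) ?_ hx
      rw [← ih, ← safeLimit_eq_sum htT]
  refine ⟨s, hsR, fun t hst => by_contra fun hT => ?_⟩
  exact hpos.ne' (hconst t hst ▸ safeLimit_eq_zero hT)

end Finite

end POMDP

lemma pstar_dvd_iff {n k : ℕ} : pstar n ∣ k ↔ ∀ i : Fin n, Nat.nth Nat.Prime i ∣ k := by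
  refine ⟨fun h i => (dvd_prod_of_mem _ (mem_univ i)).trans h,
    Fintype.prod_dvd_of_isRelPrime fun i j hij => Nat.coprime_iff_isRelPrime.1 ?_⟩
  refine (Nat.coprime_primes (Nat.prime_nth_prime _) (Nat.prime_nth_prime _)).2 fun h => hij ?_
  exact Fin.val_injective (Nat.nth_injective Nat.infinite_setOfPred_prime h)

lemma two_pow_le_pstar (n : ℕ) : 2 ^ n ≤ pstar n := by
  simpa [pstar] using prod_le_prod' (s := univ) fun (i : Fin n) _ =>
    (Nat.prime_nth_prime i).two_le

lemma pstar_pos (n : ℕ) : 0 < pstar n :=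
  (Nat.two_pow_pos n).trans_le (two_pow_le_pstar n)

lemma card_pnState (n : ℕ) :
    Fintype.card (PnState n) = 2 + ∑ i : Fin n, Nat.nth Nat.Prime i.val := by
  simp [add_comm]

lemma Nat.add_one_mod_of_mod_add_one_lt {p k : ℕ} (h : k % p + 1 < p) :
    (k + 1) % p = k % p + 1 := by
  rw [Nat.add_mod_of_add_mod_lt] <;> rw [Nat.mod_eq_of_lt (by omega : 1 < p)]
  exact h

lemma Nat.mod_add_one_lt_iff_not_dvd {p k : ℕ} (hp : 0 < p) : k % p + 1 < p ↔ ¬ p ∣ k + 1 := by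
  refine ⟨fun h hdvd => ?_, fun h => by_contra fun hge => h ⟨k / p + 1, ?_⟩⟩
  · have := Nat.mod_eq_zero_of_dvd hdvd
    rw [Nat.add_one_mod_of_mod_add_one_lt h] at this
    omega
  · have := Nat.div_add_mod k p
    have := Nat.mod_lt k hp
    rw [Nat.mul_add]
    generalize p * (k / p) = t at *
    omega

@[simp]
lemma POMDP.half_apply_left_ne_zero {L : Type} (x y : L) : POMDP.half x y x ≠ 0 := by
  rw [← PMF.mem_support_iff, POMDP.half, PMF.support_map]
  exact ⟨true, by simp, rfl⟩

@[simp]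
lemma POMDP.half_apply_right_ne_zero {L : Type} (x y : L) : POMDP.half x y y ≠ 0 := by
  rw [← PMF.mem_support_iff, POMDP.half, PMF.support_map]
  exact ⟨false, by simp, rfl⟩

noncomputable def loopState {n : ℕ} (i : Fin n) (k : ℕ) : PnState n :=
  Sum.inl ⟨i, ⟨k % Nat.nth Nat.Prime i, Nat.mod_lt _ (Nat.prime_nth_prime i).pos⟩⟩

section PnTransitions

variable {n : ℕ} [NeZero n]

lemma pnM_δ_loopState_none {i : Fin n} {k : ℕ} (hk : ¬ Nat.nth Nat.Prime i ∣ k + 1) :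
    (PnM n).δ (loopState i k) none (Sum.inr 1) ≠ 0 := by
  have hlt := (Nat.mod_add_one_lt_iff_not_dvd (Nat.prime_nth_prime i).pos).2 hk
  simp [PnM, loopState, hlt]

lemma pnM_δ_loopState_self {i : Fin n} {k : ℕ} (hk : Nat.nth Nat.Prime i ∣ k + 1) :
    (PnM n).δ (loopState i k) (some i) (Sum.inr 1) ≠ 0 := by
  have hlt := (Nat.mod_add_one_lt_iff_not_dvd (Nat.prime_nth_prime i).pos).not_left.2 hk
  simp [PnM, loopState, hlt]

lemma pnM_δ_loopState_succ {i σ : Fin n} {k : ℕ}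
    (h : ¬ (Nat.nth Nat.Prime i ∣ k + 1 ∧ σ = i)) :
    (PnM n).δ (loopState i k) (some σ) (loopState i (k + 1)) ≠ 0 := by
  by_cases hlt : k % Nat.nth Nat.Prime i + 1 < Nat.nth Nat.Prime i
  · simp [PnM, loopState, hlt, Nat.add_one_mod_of_mod_add_one_lt hlt]
  · have hdvd := not_not.1 <| (Nat.mod_add_one_lt_iff_not_dvd (Nat.prime_nth_prime i).pos).not.1 hlt
    have hσ : σ ≠ i := fun hσ => h ⟨hdvd, hσ⟩
    simp [PnM, loopState, hlt, hσ, Nat.mod_eq_zero_of_dvd hdvd]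

lemma pnM_δ_inl_exit (x : Σ i : Fin n, Fin (Nat.nth Nat.Prime i.val)) (a : PnAction n) :
    (PnM n).δ (Sum.inl x) a (Sum.inr 1) ≠ 0 ∨ (PnM n).δ (Sum.inl x) a (Sum.inr 0) ≠ 0 := by
  obtain ⟨i, j⟩ := x
  rcases a with _ | σ <;> by_cases hlt : j.val + 1 < Nat.nth Nat.Prime i
  all_goals simp only [PnM, hlt, dite_true, dite_false]; (try split_ifs) <;> simp

lemma pnM_δ_init_loopState (σ i : Fin n) :
    (PnM n).δ (Sum.inr 0) (some σ) (loopState i 0) ≠ 0 := by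
  rw [← PMF.mem_support_iff]
  simp [PnM, loopState]

lemma pnM_δ_init_none : (PnM n).δ (Sum.inr 0) none (Sum.inr 1) ≠ 0 := by
  simp [PnM]

end PnTransitions

section PnStrategies

variable {n : ℕ} [NeZero n] {Mem : Type}
  (u : Mem → Fin 3 → PnAction n → Mem) (next : Mem → Fin 3 → PMF (PnAction n))

lemma exists_surelySafe_init {s : Mem × PnState n}
    (hs : (PnM n).SurelySafe u next {Sum.inr 1}ᶜ s) :
    ∃ m, (PnM n).SurelySafe u next {Sum.inr 1}ᶜ (m, Sum.inr 0) := by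
  obtain ⟨m, x | k⟩ := s
  · obtain ⟨a, ha⟩ := (next m 1).support_nonempty
    rcases pnM_δ_inl_exit x a with hbad | hinit
    · exact absurd (hs.apply_eq_zero hbad (by simp)) ha
    · exact ⟨_, hs.step ha hinit⟩
  · obtain rfl : k = 0 := by
      have := hs.mem
      fin_cases k <;> simp_all
    exact ⟨m, hs⟩

def LoopsSafe (m : Mem) (k : ℕ) : Prop :=
  ∀ i, (PnM n).SurelySafe u next {Sum.inr 1}ᶜ (m, loopState i k)

lemma exists_loopsSafe_zero {m : Mem}
    (hm : (PnM n).SurelySafe u next {Sum.inr 1}ᶜ (m, Sum.inr 0)) :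
    ∃ m', LoopsSafe u next m' 0 := by
  obtain ⟨a | σ, ha⟩ := (next m 0).support_nonempty
  · exact absurd (hm.apply_eq_zero pnM_δ_init_none (by simp)) ha
  · exact ⟨_, fun i => hm.step ha (pnM_δ_init_loopState σ i)⟩

noncomputable def loopMove (m : Mem) : Mem := u m 1 (next m 1).support_nonempty.some

namespace LoopsSafe

variable {u next} {m : Mem} {k : ℕ}

lemma apply_none_eq_zero (h : LoopsSafe u next m k) (hk : ¬ pstar n ∣ k + 1) :
    next m 1 none = 0 := by
  obtain ⟨i, hi⟩ := not_forall.1 (pstar_dvd_iff.not.1 hk)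
  exact (h i).apply_eq_zero (pnM_δ_loopState_none hi) (by simp)

lemma apply_none_ne_zero (h : LoopsSafe u next m k) (hk : pstar n ∣ k + 1) :
    next m 1 none ≠ 0 := by
  obtain ⟨a | σ, ha⟩ := (next m 1).support_nonempty
  · exact ha
  · exact absurd ((h σ).apply_eq_zero (pnM_δ_loopState_self (pstar_dvd_iff.1 hk σ)) (by simp)) ha

lemma step (h : LoopsSafe u next m k) {σ : Fin n} (hσ : next m 1 (some σ) ≠ 0) :
    LoopsSafe u next (u m 1 (some σ)) (k + 1) := by
  intro i
  refine (h i).step hσ (pnM_δ_loopState_succ ?_)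
  rintro ⟨hdvd, rfl⟩
  exact hσ ((h σ).apply_eq_zero (pnM_δ_loopState_self hdvd) (by simp))

lemma loopMove_succ (h : LoopsSafe u next m k) (hk : ¬ pstar n ∣ k + 1) :
    LoopsSafe u next (loopMove u next m) (k + 1) := by
  have ha := (next m 1).support_nonempty.some_mem
  unfold loopMove
  generalize (next m 1).support_nonempty.some = a at ha ⊢
  rcases a with _ | σ
  · exact absurd (h.apply_none_eq_zero hk) ha
  · exact h.step ha

lemma iterate_loopMove (h : LoopsSafe u next m 0) :
    ∀ k < pstar n, LoopsSafe u next ((loopMove u next)^[k] m) k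
  | 0, _ => h
  | k + 1, hk => by
    rw [Function.iterate_succ_apply']
    exact (iterate_loopMove h k (by omega)).loopMove_succ (Nat.not_dvd_of_pos_of_lt k.succ_pos hk)

end LoopsSafe

end PnStrategies

/-- For every `n ≥ 1`, in the POMDP `P_n` with the safety
objective `Safe(L ∖ {Bad})`, every finite-memory randomized (observation-based)
strategy that is positive winning from `q_0` has memory of size at least
`p*_n = p_1 ⋯ p_n`; in particular `p*_n ≥ 2^n`, while `P_n` has
`2 + (p_1 + ⋯ + p_n)` states. -/
theorem pn_positive_safe_memory_lower_bound (n : ℕ) [NeZero n] :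
    (∀ (Mem : Type) (iM : Fintype Mem) (m0 : Mem)
        (u : Mem → Fin 3 → PnAction n → Mem)
        (next : Mem → Fin 3 → PMF (PnAction n)),
        0 < (PnM n).safeProb ((PnM n).fmStrategy u next m0)
              (Sum.inr 0) {(Sum.inr 1 : PnState n)}ᶜ →
        pstar n ≤ @Fintype.card Mem iM) ∧
    2 ^ n ≤ pstar n ∧
    Fintype.card (PnState n) = 2 + ∑ i : Fin n, Nat.nth Nat.Prime i.val := by
  refine ⟨fun Mem iM m0 u next hpos => ?_, two_pow_le_pstar n, card_pnState n⟩
  obtain ⟨s, -, hs⟩ := POMDP.exists_surelySafe_of_safeProb_pos hpos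
  obtain ⟨m, hm⟩ := exists_surelySafe_init u next hs
  obtain ⟨m₁, hm₁⟩ := exists_loopsSafe_zero u next hm
  have hp := pstar_pos n
  have hsafe := hm₁.iterate_loopMove
  have hcard := Function.add_one_le_card_of_iterate (P := fun m => next m 1 none ≠ 0)
    ((hsafe (pstar n - 1) (by omega)).apply_none_ne_zero (by rw [Nat.sub_add_cancel hp]))
    fun k hk => not_not.2 <| (hsafe k (by omega)).apply_none_eq_zero <|
      Nat.not_dvd_of_pos_of_lt k.succ_pos (by omega)
  omega
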